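/- Let f and g be differentiable models with parameter spaces ℝ^{M_A} and ℝ^{M_B}. Suppose P : ℝ^{M_A} → ℝ^{M_B} satisfies: (i) f_θ = g_{P(θ)} for all θ; (ii) for every finite dataset S and the mean-squared error risk, if θ is a critical point of the risk for f, then P(θ) is a critical point of the risk for g. Then for every θ* ∈ ℝ^{M_A} and every dataset S, rank_S(P(θ*)) ≤ rank_S(θ*), and hence the model rank satisfies rank_g(P(θ*)) ≤ rank_f(θ*) ≤ M_A, so the optimistic sample size O_g(f*) ≤ O_f(f*) ≤ M_A for all f* expressible by f. -/

import Mathlib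

open scoped BigOperators

section Core

variable {α : Type*} {ι : Type*} [Fintype ι] [DecidableEq ι]

/-- Partial derivative of the model output w.r.t. parameter `i`, as a function of the input. -/
noncomputable def pgrad (f : α → (ι → ℝ) → ℝ) (θ : ι → ℝ) (i : ι) : α → ℝ :=
  fun x => fderiv ℝ (f x) θ (Pi.single i 1)

/-- The tangent function hyperplane at parameter `θ`. -/
noncomputable def tangentSet (f : α → (ι → ℝ) → ℝ) (θ : ι → ℝ) : Set (α → ℝ) :=
  {g | ∃ a : ι → ℝ, g = fun x => f x θ + ∑ i, a i * pgrad f θ i x}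

/-- A continuously differentiable distance-type loss. -/
def IsDistanceLoss (ℓ : ℝ → ℝ → ℝ) : Prop :=
  ContDiff ℝ 1 (Function.uncurry ℓ) ∧ ∀ y y' : ℝ, 0 ≤ ℓ y y' ∧ (ℓ y y' = 0 ↔ y = y')

/-- The empirical loss of `g` on the dataset sampled from `fstar` at inputs `X`. -/
noncomputable def empLoss (ℓ : ℝ → ℝ → ℝ) {n : ℕ} (X : Fin n → α) (fstar g : α → ℝ) : ℝ :=
  (1 / n : ℝ) * ∑ i, ℓ (g (X i)) (fstar (X i))

/-- `fstar` has LLR-guarantee at `θ` from the dataset with inputs `X`: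
`fstar` is the unique minimizer of the empirical loss over the tangent hyperplane at `θ`. -/
def LLRAt (ℓ : ℝ → ℝ → ℝ) (f : α → (ι → ℝ) → ℝ) (θ : ι → ℝ)
    {n : ℕ} (X : Fin n → α) (fstar : α → ℝ) : Prop :=
  fstar ∈ tangentSet f θ ∧
  (∀ h ∈ tangentSet f θ, empLoss ℓ X fstar fstar ≤ empLoss ℓ X fstar h) ∧
  (∀ g ∈ tangentSet f θ,
    (∀ h ∈ tangentSet f θ, empLoss ℓ X fstar g ≤ empLoss ℓ X fstar h) → g = fstar)

/-- `fstar` has an `n`-sample LLR-guarantee. -/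
def HasLLR (ℓ : ℝ → ℝ → ℝ) (f : α → (ι → ℝ) → ℝ) (fstar : α → ℝ) (n : ℕ) : Prop :=
  ∃ X : Fin n → α, ∃ θ : ι → ℝ, (fun x => f x θ) = fstar ∧ LLRAt ℓ f θ X fstar

/-- Model rank at a parameter point: dimension of the span of the tangent functions. -/
noncomputable def modelRankAt (f : α → (ι → ℝ) → ℝ) (θ : ι → ℝ) : ℕ :=
  Module.finrank ℝ (Submodule.span ℝ (Set.range (pgrad f θ)))

/-- Model rank of a function: minimum model rank over parameters representing it. -/
noncomputable def modelRank (f : α → (ι → ℝ) → ℝ) (fstar : α → ℝ) : ℕ :=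
  sInf {r | ∃ θ : ι → ℝ, (fun x => f x θ) = fstar ∧ modelRankAt f θ = r}

/-- Empirical model rank: rank of the empirical tangent matrix. -/
noncomputable def empRank (f : α → (ι → ℝ) → ℝ) (θ : ι → ℝ) {n : ℕ} (X : Fin n → α) : ℕ :=
  (Matrix.of fun (i : ι) (j : Fin n) => pgrad f θ i (X j)).rank

/-- Optimistic sample size: the smallest sample size with LLR-guarantee. -/
noncomputable def optSampleSize (ℓ : ℝ → ℝ → ℝ) (f : α → (ι → ℝ) → ℝ) (fstar : α → ℝ) : ℕ :=
  sInf {n | HasLLR ℓ f fstar n}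

end Core

section Aux

variable {α : Type*}

open Submodule Set Module

/-- separating points for a finite family of functions -/
lemma exists_separating_points {ι : Type*} [Fintype ι] (u : ι → α → ℝ) :
    ∃ (n : ℕ) (X : Fin n → α), n ≤ Fintype.card ι ∧
      ∀ w ∈ Submodule.span ℝ (Set.range u), (∀ j, w (X j) = 0) → w = 0 := by
  classical
  set Φ : α → (ι → ℝ) := fun x i => u i x with hΦ
  obtain ⟨b, hbsub, hbspan, hbind⟩ := exists_linearIndependent ℝ (Set.range Φ)
  have hbfin : b.Finite := hbind.setFinite
  haveI := hbfin.fintype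
  have hcard : Fintype.card b ≤ Fintype.card ι := by
    have h1 : Module.finrank ℝ (Submodule.span ℝ b) = b.toFinset.card :=
      finrank_span_set_eq_card hbind
    have h2 : Module.finrank ℝ (Submodule.span ℝ b) ≤ Module.finrank ℝ (ι → ℝ) :=
      Submodule.finrank_le _
    rw [Module.finrank_pi] at h2
    rw [Set.toFinset_card] at h1
    omega
  set n := Fintype.card b with hn
  set e : Fin n → b := fun j => (Fintype.equivFin b).symm j with he
  have hXex : ∀ j : Fin n, ∃ x : α, Φ x = (e j : ι → ℝ) := fun j => hbsub (e j).2
  choose X hX using hXex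
  refine ⟨n, X, hcard, fun w hw hzero => ?_⟩
  obtain ⟨a, hwa⟩ := (mem_span_range_iff_exists_fun ℝ).mp hw
  have key : ∀ v ∈ Submodule.span ℝ b, ∑ i, a i * v i = 0 := by
    intro v hv
    induction hv using Submodule.span_induction with
    | mem v hv =>
        obtain ⟨j, hj⟩ : ∃ j : Fin n, (e j : ι → ℝ) = v :=
          ⟨(Fintype.equivFin b) ⟨v, hv⟩, by simp [he]⟩
        have h0 := hzero j
        rw [← hwa] at h0
        simp only [Finset.sum_apply, Pi.smul_apply, smul_eq_mul] at h0
        have : ∀ i, u i (X j) = v i := by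
          intro i
          have := congrFun (hX j) i
          rw [hj] at this
          simpa [hΦ] using this
        simpa [this] using h0
    | zero => simp
    | add v v' _ _ hv hv' => simp [Pi.add_apply, mul_add, Finset.sum_add_distrib, hv, hv']
    | smul c v _ hv =>
        simp only [Pi.smul_apply, smul_eq_mul]
        rw [Finset.sum_congr rfl (fun i _ => by ring_nf : ∀ i ∈ Finset.univ,
          a i * (c * v i) = c * (a i * v i)), ← Finset.mul_sum, hv, mul_zero]
  funext x
  have hx : Φ x ∈ Submodule.span ℝ b := by
    rw [hbspan]; exact subset_span (mem_range_self x)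
  have := key _ hx
  rw [← hwa]
  simpa [Finset.sum_apply, hΦ] using this

end Aux

section Aux2

variable {α : Type*}

open Submodule Set Module

lemma risk_fderiv {M : ℕ} (f : α → (Fin M → ℝ) → ℝ) (hdf : ∀ x, Differentiable ℝ (f x))
    {n : ℕ} (X : Fin n → α) (y : Fin n → ℝ) (θ : Fin M → ℝ) :
    fderiv ℝ (fun θ' => (1 / 2 : ℝ) * ∑ i, (f (X i) θ' - y i) ^ 2) θ
      = ∑ i, (f (X i) θ - y i) • fderiv ℝ (f (X i)) θ := by
  have h : ∀ i : Fin n, HasFDerivAt (fun θ' => (f (X i) θ' - y i) ^ 2)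
      (((2:ℝ) * (f (X i) θ - y i)) • fderiv ℝ (f (X i)) θ) θ := by
    intro i
    have hu := ((hdf (X i)) θ).hasFDerivAt.sub_const (y i)
    simpa [pow_two, two_mul, add_smul] using hu.fun_mul hu
  have hs := (HasFDerivAt.fun_sum (fun i (_ : i ∈ Finset.univ) => h i)).const_mul (1/2 : ℝ)
  rw [hs.fderiv, Finset.smul_sum]
  refine Finset.sum_congr rfl fun i _ => ?_
  rw [smul_smul]
  congr 1
  ring

lemma clm_zero_of_single {M : ℕ} (T : (Fin M → ℝ) →L[ℝ] ℝ)
    (h : ∀ i, T (Pi.single i 1) = 0) : T = 0 := by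
  ext v
  have hv : v = ∑ i, v i • (Pi.single i 1 : Fin M → ℝ) := by
    funext j
    simp [Pi.single_apply, Finset.sum_apply]
  rw [hv]
  simp [h]

lemma exists_dual_separating {n : ℕ} (U : Submodule ℝ (Fin n → ℝ)) (v : Fin n → ℝ)
    (hv : v ∉ U) :
    ∃ φ : (Fin n → ℝ) →ₗ[ℝ] ℝ, (∀ u ∈ U, φ u = 0) ∧ φ v ≠ 0 := by
  have h1 : U.mkQ v ≠ 0 := by
    simpa [Submodule.Quotient.mk_eq_zero] using hv
  obtain ⟨ψ, hψ⟩ : ∃ ψ : Module.Dual ℝ ((Fin n → ℝ) ⧸ U), ψ (U.mkQ v) ≠ 0 := by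
    by_contra hcon
    push_neg at hcon
    exact h1 ((Module.forall_dual_apply_eq_zero_iff ℝ _).mp hcon)
  refine ⟨ψ.comp U.mkQ, fun u hu => ?_, hψ⟩
  have : U.mkQ u = 0 := by simpa [Submodule.Quotient.mk_eq_zero] using hu
  simp [LinearMap.comp_apply, this]

lemma rank_le_of_ker_le {m1 m2 n : ℕ} (A : Matrix (Fin m1) (Fin n) ℝ)
    (B : Matrix (Fin m2) (Fin n) ℝ)
    (h : LinearMap.ker A.mulVecLin ≤ LinearMap.ker B.mulVecLin) : B.rank ≤ A.rank := by
  have hA := LinearMap.finrank_range_add_finrank_ker A.mulVecLin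
  have hB := LinearMap.finrank_range_add_finrank_ker B.mulVecLin
  have hk : finrank ℝ (LinearMap.ker A.mulVecLin) ≤ finrank ℝ (LinearMap.ker B.mulVecLin) :=
    Submodule.finrank_mono h
  rw [Module.finrank_pi] at hA hB
  rw [Matrix.rank, Matrix.rank]
  omega

end Aux2

section Aux3

variable {α : Type*}

open Submodule Set Module

lemma grad_kernel {MA MB : ℕ}
    (f : α → (Fin MA → ℝ) → ℝ) (g : α → (Fin MB → ℝ) → ℝ)
    (hdf : ∀ x, Differentiable ℝ (f x)) (hdg : ∀ x, Differentiable ℝ (g x))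
    (P : (Fin MA → ℝ) → (Fin MB → ℝ))
    (houtput : ∀ θ : Fin MA → ℝ, ∀ x, f x θ = g x (P θ))
    (hcrit : ∀ (n : ℕ) (X : Fin n → α) (y : Fin n → ℝ) (θ : Fin MA → ℝ),
      fderiv ℝ (fun θ' => (1 / 2 : ℝ) * ∑ i, (f (X i) θ' - y i) ^ 2) θ = 0 →
      fderiv ℝ (fun θ' => (1 / 2 : ℝ) * ∑ i, (g (X i) θ' - y i) ^ 2) (P θ) = 0)
    (θs : Fin MA → ℝ) (n : ℕ) (X : Fin n → α) (c : Fin n → ℝ)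
    (hc : ∀ i, ∑ j, c j * pgrad f θs i (X j) = 0) :
    ∀ k, ∑ j, c j * pgrad g (P θs) k (X j) = 0 := by
  set y : Fin n → ℝ := fun j => f (X j) θs - c j with hy
  have hres : ∀ j, f (X j) θs - y j = c j := fun j => by simp [hy]
  have hf0 : fderiv ℝ (fun θ' => (1/2:ℝ) * ∑ i, (f (X i) θ' - y i)^2) θs = 0 := by
    rw [risk_fderiv f hdf X y θs]
    apply clm_zero_of_single
    intro i
    rw [ContinuousLinearMap.sum_apply]
    have := hc i
    simp only [ContinuousLinearMap.smul_apply, hres, smul_eq_mul]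
    simpa [pgrad] using this
  have hg0 := hcrit n X y θs hf0
  rw [risk_fderiv g hdg X y (P θs)] at hg0
  intro k
  have happ := congrArg (fun T : (Fin MB → ℝ) →L[ℝ] ℝ => T (Pi.single k 1)) hg0
  simp only [ContinuousLinearMap.sum_apply, ContinuousLinearMap.smul_apply,
    ContinuousLinearMap.zero_apply, smul_eq_mul] at happ
  have hresg : ∀ j, g (X j) (P θs) - y j = c j := fun j => by
    rw [← houtput θs (X j)]; exact hres j
  simpa [pgrad, hresg] using happ

lemma span_pgrad_le {MA MB : ℕ}
    (f : α → (Fin MA → ℝ) → ℝ) (g : α → (Fin MB → ℝ) → ℝ)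
    (P : (Fin MA → ℝ) → (Fin MB → ℝ)) (θs : Fin MA → ℝ)
    (hker : ∀ (n : ℕ) (X : Fin n → α) (c : Fin n → ℝ),
      (∀ i, ∑ j, c j * pgrad f θs i (X j) = 0) →
      ∀ k, ∑ j, c j * pgrad g (P θs) k (X j) = 0) :
    Submodule.span ℝ (Set.range (pgrad g (P θs))) ≤
      Submodule.span ℝ (Set.range (pgrad f θs)) := by
  classical
  obtain ⟨n, X, -, hsep⟩ :=
    exists_separating_points (Sum.elim (pgrad f θs) (pgrad g (P θs)))
  have hrange : Set.range (Sum.elim (pgrad f θs) (pgrad g (P θs)))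
      = Set.range (pgrad f θs) ∪ Set.range (pgrad g (P θs)) := Sum.elim_range _ _
  set W := Submodule.span ℝ (Set.range (Sum.elim (pgrad f θs) (pgrad g (P θs)))) with hW
  have hfW : Submodule.span ℝ (Set.range (pgrad f θs)) ≤ W := by
    rw [hW, hrange]; exact Submodule.span_mono (Set.subset_union_left)
  have hgW : Submodule.span ℝ (Set.range (pgrad g (P θs))) ≤ W := by
    rw [hW, hrange]; exact Submodule.span_mono (Set.subset_union_right)
  rw [Submodule.span_le]
  rintro _ ⟨k, rfl⟩
  set E : (α → ℝ) →ₗ[ℝ] (Fin n → ℝ) := LinearMap.pi (fun j => LinearMap.proj (X j)) with hE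
  set Vf := Submodule.span ℝ (Set.range (pgrad f θs)) with hVf
  by_cases hmem : E (pgrad g (P θs) k) ∈ Vf.map E
  · obtain ⟨w, hwVf, hEw⟩ := hmem
    have hz : pgrad g (P θs) k - w = 0 := by
      apply hsep _ (Submodule.sub_mem _ (hgW (subset_span (mem_range_self k))) (hfW hwVf))
      intro j
      have := congrFun hEw j
      simp only [hE, LinearMap.pi_apply, LinearMap.proj_apply] at this
      simp [Pi.sub_apply, this]
    have : pgrad g (P θs) k = w := by
      have := sub_eq_zero.mp hz; exact this
    rw [this]
    exact hwVf
  · exfalso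
    obtain ⟨φ, hφ0, hφv⟩ := exists_dual_separating (Vf.map E) _ hmem
    set c : Fin n → ℝ := fun j => φ (Pi.single j 1) with hc
    have hφeq : ∀ v : Fin n → ℝ, φ v = ∑ j, v j * c j := by
      intro v
      have hv : v = ∑ j, v j • (Pi.single j 1 : Fin n → ℝ) := by
        funext m
        simp [Pi.single_apply, Finset.sum_apply]
      conv_lhs => rw [hv]
      simp [hc, map_sum, map_smul, smul_eq_mul]
    have hfc : ∀ i, ∑ j, c j * pgrad f θs i (X j) = 0 := by
      intro i
      have h0 : φ (E (pgrad f θs i)) = 0 :=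
        hφ0 _ (Submodule.mem_map_of_mem (subset_span (mem_range_self i)))
      rw [hφeq] at h0
      simp only [hE, LinearMap.pi_apply, LinearMap.proj_apply] at h0
      rw [← h0]
      exact Finset.sum_congr rfl fun j _ => mul_comm _ _
    have hgc := hker n X c hfc k
    apply hφv
    rw [hφeq]
    simp only [hE, LinearMap.pi_apply, LinearMap.proj_apply]
    rw [← hgc]
    exact Finset.sum_congr rfl fun j _ => mul_comm _ _

end Aux3

section Aux4

variable {α : Type*}

open Submodule Set Module

lemma empLoss_self {ℓ : ℝ → ℝ → ℝ} (hℓ : IsDistanceLoss ℓ) {n : ℕ} (X : Fin n → α)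
    (fstar : α → ℝ) : empLoss ℓ X fstar fstar = 0 := by
  have : ∀ i : Fin n, ℓ (fstar (X i)) (fstar (X i)) = 0 := fun i => (hℓ.2 _ _).2.mpr rfl
  simp [empLoss, this]

lemma empLoss_nonneg {ℓ : ℝ → ℝ → ℝ} (hℓ : IsDistanceLoss ℓ) {n : ℕ} (X : Fin n → α)
    (fstar h : α → ℝ) : 0 ≤ empLoss ℓ X fstar h := by
  apply mul_nonneg (by positivity)
  exact Finset.sum_nonneg fun i _ => (hℓ.2 _ _).1

lemma empLoss_eq_zero_agree {ℓ : ℝ → ℝ → ℝ} (hℓ : IsDistanceLoss ℓ) {n : ℕ} (X : Fin n → α)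
    (fstar h : α → ℝ) (h0 : empLoss ℓ X fstar h = 0) (j : Fin n) : h (X j) = fstar (X j) := by
  have hn : 0 < n := j.pos
  have hne : (1 / (n:ℝ)) ≠ 0 := by positivity
  have hsum : ∑ i, ℓ (h (X i)) (fstar (X i)) = 0 := by
    rcases mul_eq_zero.mp h0 with h1 | h2
    · exact absurd h1 hne
    · exact h2
  have := (Finset.sum_eq_zero_iff_of_nonneg (fun i _ => (hℓ.2 (h (X i)) (fstar (X i))).1)).mp
    hsum j (Finset.mem_univ j)
  exact (hℓ.2 _ _).2.mp this

lemma tangentSet_subset {ι κ : Type*} [Fintype ι] [DecidableEq ι] [Fintype κ] [DecidableEq κ]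
    (f : α → (ι → ℝ) → ℝ) (g : α → (κ → ℝ) → ℝ) (θ : ι → ℝ) (η : κ → ℝ)
    (hbase : ∀ x, g x η = f x θ)
    (hspan : Submodule.span ℝ (Set.range (pgrad g η)) ≤
      Submodule.span ℝ (Set.range (pgrad f θ))) :
    tangentSet g η ⊆ tangentSet f θ := by
  rintro h ⟨a, rfl⟩
  have hmem : (fun x => ∑ k, a k * pgrad g η k x) ∈
      Submodule.span ℝ (Set.range (pgrad f θ)) := by
    apply hspan
    rw [mem_span_range_iff_exists_fun ℝ]
    exact ⟨a, by funext x; simp [Finset.sum_apply]⟩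
  obtain ⟨b, hb⟩ := (mem_span_range_iff_exists_fun ℝ).mp hmem
  refine ⟨b, ?_⟩
  funext x
  rw [hbase x]
  congr 1
  have := congrFun hb x
  simp only [Finset.sum_apply, Pi.smul_apply, smul_eq_mul] at this
  exact this.symm

/-- LLR transfer from `f` to `g` along a critical mapping. -/
lemma hasLLR_transfer {ℓ : ℝ → ℝ → ℝ} (hℓ : IsDistanceLoss ℓ) {MA MB : ℕ}
    (f : α → (Fin MA → ℝ) → ℝ) (g : α → (Fin MB → ℝ) → ℝ)
    (P : (Fin MA → ℝ) → (Fin MB → ℝ))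
    (houtput : ∀ θ : Fin MA → ℝ, ∀ x, f x θ = g x (P θ))
    (hspan : ∀ θ : Fin MA → ℝ, Submodule.span ℝ (Set.range (pgrad g (P θ))) ≤
      Submodule.span ℝ (Set.range (pgrad f θ)))
    (fstar : α → ℝ) (n : ℕ) (h : HasLLR ℓ f fstar n) : HasLLR ℓ g fstar n := by
  obtain ⟨X, θ, hrep, hmem, hmin, huniq⟩ := h
  have hbase : ∀ x, g x (P θ) = f x θ := fun x => (houtput θ x).symm
  have hgrep : (fun x => g x (P θ)) = fstar := by
    funext x; rw [hbase x]; exact congrFun hrep x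
  have hsub : tangentSet g (P θ) ⊆ tangentSet f θ :=
    tangentSet_subset f g θ (P θ) hbase (hspan θ)
  refine ⟨X, P θ, hgrep, ⟨0, ?_⟩, fun h hh => hmin h (hsub hh), fun q hq hqmin => ?_⟩
  · funext x
    simp [← congrFun hgrep x]
  · refine huniq q (hsub hq) fun h hh => ?_
    calc empLoss ℓ X fstar q ≤ empLoss ℓ X fstar fstar := hqmin fstar ⟨0, by
          funext x; simp [← congrFun hgrep x]⟩
      _ = 0 := empLoss_self hℓ X fstar
      _ ≤ empLoss ℓ X fstar h := empLoss_nonneg hℓ X fstar h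

/-- existence of an LLR dataset of size at most the parameter count -/
lemma hasLLR_exists {ℓ : ℝ → ℝ → ℝ} (hℓ : IsDistanceLoss ℓ) {M : ℕ}
    (f : α → (Fin M → ℝ) → ℝ) (fstar : α → ℝ) (θ : Fin M → ℝ)
    (hrep : (fun x => f x θ) = fstar) :
    ∃ n ≤ M, HasLLR ℓ f fstar n := by
  obtain ⟨n, X, hn, hsep⟩ := exists_separating_points (pgrad f θ)
  rw [Fintype.card_fin] at hn
  refine ⟨n, hn, X, θ, hrep, ⟨0, by funext x; simp [← congrFun hrep x]⟩,
    fun h _ => by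
      rw [empLoss_self hℓ X fstar]
      exact empLoss_nonneg hℓ X fstar h, fun q hq hqmin => ?_⟩
  obtain ⟨a, rfl⟩ := hq
  have hq0 : empLoss ℓ X fstar (fun x => f x θ + ∑ i, a i * pgrad f θ i x) = 0 := by
    refine le_antisymm ?_ (empLoss_nonneg hℓ X fstar _)
    have := hqmin fstar ⟨0, by funext x; simp [← congrFun hrep x]⟩
    rwa [empLoss_self hℓ X fstar] at this
  have hagree : ∀ j, (fun x => f x θ + ∑ i, a i * pgrad f θ i x) (X j) = fstar (X j) :=
    fun j => empLoss_eq_zero_agree hℓ X fstar _ hq0 j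
  have hcombo : (fun x => ∑ i, a i * pgrad f θ i x) ∈
      Submodule.span ℝ (Set.range (pgrad f θ)) := by
    rw [mem_span_range_iff_exists_fun ℝ]
    exact ⟨a, by funext x; simp [Finset.sum_apply]⟩
  have hzero : (fun x => ∑ i, a i * pgrad f θ i x) = 0 := by
    apply hsep _ hcombo
    intro j
    have := hagree j
    simp only at this
    have hfx : f (X j) θ = fstar (X j) := congrFun hrep (X j)
    linarith [this, hfx]
  funext x
  have := congrFun hzero x
  simp only [Pi.zero_apply] at this
  simp [this, congrFun hrep x]

end Aux4

/-- a critical mapping `P` (output-preserving and criticality-preserving for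
MSE risk on arbitrary data) does not increase the empirical rank, the model rank, nor
the optimistic sample size; and these are bounded by the parameter count `M_A` of the
narrower model. -/
theorem critical_mapping_bounds {α : Type*} {MA MB : ℕ} (ℓ : ℝ → ℝ → ℝ)
    (hℓ : IsDistanceLoss ℓ)
    (f : α → (Fin MA → ℝ) → ℝ) (g : α → (Fin MB → ℝ) → ℝ)
    (hdf : ∀ x, Differentiable ℝ (f x)) (hdg : ∀ x, Differentiable ℝ (g x))
    (P : (Fin MA → ℝ) → (Fin MB → ℝ))
    (houtput : ∀ θ : Fin MA → ℝ, ∀ x, f x θ = g x (P θ))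
    (hcrit : ∀ (n : ℕ) (X : Fin n → α) (y : Fin n → ℝ) (θ : Fin MA → ℝ),
      fderiv ℝ (fun θ' => (1 / 2 : ℝ) * ∑ i, (f (X i) θ' - y i) ^ 2) θ = 0 →
      fderiv ℝ (fun θ' => (1 / 2 : ℝ) * ∑ i, (g (X i) θ' - y i) ^ 2) (P θ) = 0) :
    (∀ (θs : Fin MA → ℝ) (n : ℕ) (X : Fin n → α), empRank g (P θs) X ≤ empRank f θs X) ∧
    (∀ θs : Fin MA → ℝ, modelRankAt g (P θs) ≤ modelRankAt f θs ∧ modelRankAt f θs ≤ MA) ∧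
    (∀ fstar : α → ℝ, (∃ θ : Fin MA → ℝ, (fun x => f x θ) = fstar) →
      optSampleSize ℓ g fstar ≤ optSampleSize ℓ f fstar ∧ optSampleSize ℓ f fstar ≤ MA) := by

  have hker : ∀ (θs : Fin MA → ℝ) (n : ℕ) (X : Fin n → α) (c : Fin n → ℝ),
      (∀ i, ∑ j, c j * pgrad f θs i (X j) = 0) →
      ∀ k, ∑ j, c j * pgrad g (P θs) k (X j) = 0 :=
    fun θs => grad_kernel f g hdf hdg P houtput hcrit θs
  have hspan : ∀ θs : Fin MA → ℝ, Submodule.span ℝ (Set.range (pgrad g (P θs))) ≤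
      Submodule.span ℝ (Set.range (pgrad f θs)) :=
    fun θs => span_pgrad_le f g P θs (hker θs)
  refine ⟨?_, ?_, ?_⟩
  · intro θs n X
    apply rank_le_of_ker_le
    intro c hc
    simp only [LinearMap.mem_ker, Matrix.mulVecLin_apply] at hc ⊢
    have hc' : ∀ i, ∑ j, c j * pgrad f θs i (X j) = 0 := by
      intro i
      have := congrFun hc i
      simp only [Matrix.mulVec, dotProduct, Matrix.of_apply, Pi.zero_apply] at this
      rw [← this]
      exact Finset.sum_congr rfl fun j _ => mul_comm _ _
    have hg' := hker θs n X c hc'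
    funext k
    simp only [Matrix.mulVec, dotProduct, Matrix.of_apply, Pi.zero_apply]
    rw [← hg' k]
    exact Finset.sum_congr rfl fun j _ => mul_comm _ _
  · intro θs
    constructor
    · haveI : FiniteDimensional ℝ
          (Submodule.span ℝ (Set.range (pgrad f θs))) :=
        FiniteDimensional.span_of_finite ℝ (Set.finite_range _)
      exact Submodule.finrank_mono (hspan θs)
    · classical
      haveI : Fintype (Set.range (pgrad f θs)) := Set.fintypeRange _
      refine (finrank_span_le_card _).trans ?_
      rw [Set.toFinset_card]
      simpa using Fintype.card_range_le (pgrad f θs)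
  · rintro fstar ⟨θ, hrep⟩
    obtain ⟨n, hn, hLLRf⟩ := hasLLR_exists hℓ f fstar θ hrep
    constructor
    · have hne : {m | HasLLR ℓ f fstar m}.Nonempty := ⟨n, hLLRf⟩
      have hmemInf : HasLLR ℓ f fstar (sInf {m | HasLLR ℓ f fstar m}) := Nat.sInf_mem hne
      exact Nat.sInf_le (hasLLR_transfer hℓ f g P houtput hspan fstar _ hmemInf)
    · exact le_trans (Nat.sInf_le hLLRf) hn
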